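/- arXiv:1912.07152 — 3 statements merged into one kernel-verified Lean document; each statement's English description precedes it below -/
import Mathlib

section
/- The set T(M) = {U Xᵀ - X Uᵀ : X ∈ ℝ^{n×r}} is a linear subspace of the real skew-symmetric n×n matrices and equals {Δ M + M Δᵀ : Δ ∈ ℝ^{n×n}}, where M = U D Vᵀ is a compact SVD of a rank-r skew-symmetric matrix M. -/
/-!
Write `M = U Cᵀ` with `C = V D`. Skewness turns `Δ M` into `-(Δ C) Uᵀ`, so
`Δ M + M Δᵀ = U (Δ C)ᵀ - (Δ C) Uᵀ`; and since `C` has the left inverse `D⁻¹ Vᵀ`,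
every `X` is of the form `Δ C` (take `Δ = X D⁻¹ Vᵀ`).
-/

open Matrix

section SkewTangent

variable {R n r : Type*} [CommRing R] [Fintype r]

theorem transpose_mul_transpose_sub_eq_neg (U X : Matrix n r R) :
    (U * Xᵀ - X * Uᵀ)ᵀ = -(U * Xᵀ - X * Uᵀ) := by
  simp only [transpose_sub, transpose_mul, transpose_transpose, neg_sub]

def skewTangentMap (U : Matrix n r R) : Matrix n r R →ₗ[R] Matrix n n R where
  toFun X := U * Xᵀ - X * Uᵀ
  map_add' X Y := by
    simp only [transpose_add, Matrix.mul_add, Matrix.add_mul]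
    abel
  map_smul' c X := by
    simp only [transpose_smul, Matrix.mul_smul, Matrix.smul_mul, smul_sub, RingHom.id_apply]

theorem coe_range_skewTangentMap (U : Matrix n r R) :
    (LinearMap.range (skewTangentMap U) : Set (Matrix n n R)) =
      {A | ∃ X : Matrix n r R, A = U * Xᵀ - X * Uᵀ} := by
  ext A
  simp [skewTangentMap, eq_comm]

theorem mul_add_mul_transpose_eq_of_eq_mul_transpose [Fintype n] {M : Matrix n n R}
    {U C : Matrix n r R} (hM : Mᵀ = -M) (hMC : M = U * Cᵀ) (Δ : Matrix n n R) :
    Δ * M + M * Δᵀ = U * (Δ * C)ᵀ - (Δ * C) * Uᵀ := by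
  have hMt : Mᵀ = C * Uᵀ := by rw [hMC, transpose_mul, transpose_transpose]
  have hΔM : Δ * M = -((Δ * C) * Uᵀ) := by
    rw [← neg_neg M, ← hM, hMt, Matrix.mul_neg, Matrix.mul_assoc]
  rw [hΔM, hMC, transpose_mul, Matrix.mul_assoc U]
  abel

theorem setOf_mul_transpose_sub_eq_setOf_mul_add_mul_transpose [Fintype n] [DecidableEq r]
    {M : Matrix n n R} {U C : Matrix n r R} {L : Matrix r n R}
    (hM : Mᵀ = -M) (hMC : M = U * Cᵀ) (hLC : L * C = 1) :
    {A | ∃ X : Matrix n r R, A = U * Xᵀ - X * Uᵀ} =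
      {A | ∃ Δ : Matrix n n R, A = Δ * M + M * Δᵀ} := by
  ext A
  constructor
  · rintro ⟨X, rfl⟩
    refine ⟨X * L, ?_⟩
    rw [mul_add_mul_transpose_eq_of_eq_mul_transpose hM hMC, Matrix.mul_assoc, hLC,
      Matrix.mul_one]
  · rintro ⟨Δ, rfl⟩
    exact ⟨Δ * C, mul_add_mul_transpose_eq_of_eq_mul_transpose hM hMC Δ⟩

end SkewTangent

theorem diagonal_inv_mul_transpose_mul_mul_diagonal {K n r : Type*} [DivisionRing K]
    [Fintype n] [Fintype r] [DecidableEq r] {V : Matrix n r K} {d : r → K}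
    (hV : Vᵀ * V = 1) (hd : ∀ i, d i ≠ 0) :
    (diagonal d⁻¹ * Vᵀ) * (V * diagonal d) = 1 := by
  rw [Matrix.mul_assoc, ← Matrix.mul_assoc Vᵀ, hV, Matrix.one_mul, diagonal_mul_diagonal,
    ← diagonal_one]
  exact congrArg diagonal (funext fun i => inv_mul_cancel₀ (hd i))

theorem tangent_space_rank_manifold_skew_general {n r : ℕ}
    (M : Matrix (Fin n) (Fin n) ℝ) (hM : Mᵀ = -M)
    (U V : Matrix (Fin n) (Fin r) ℝ) (d : Fin r → ℝ)
    (hV : Vᵀ * V = 1) (hd : ∀ i, d i ≠ 0)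
    (hsvd : M = U * Matrix.diagonal d * Vᵀ) :
    (∃ T : Submodule ℝ (Matrix (Fin n) (Fin n) ℝ),
      (T : Set (Matrix (Fin n) (Fin n) ℝ)) =
        {A | ∃ X : Matrix (Fin n) (Fin r) ℝ, A = U * Xᵀ - X * Uᵀ}) ∧
    (∀ A ∈ {A : Matrix (Fin n) (Fin n) ℝ |
        ∃ X : Matrix (Fin n) (Fin r) ℝ, A = U * Xᵀ - X * Uᵀ}, Aᵀ = -A) ∧
    {A : Matrix (Fin n) (Fin n) ℝ |
        ∃ X : Matrix (Fin n) (Fin r) ℝ, A = U * Xᵀ - X * Uᵀ} =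
      {A : Matrix (Fin n) (Fin n) ℝ |
        ∃ Δ : Matrix (Fin n) (Fin n) ℝ, A = Δ * M + M * Δᵀ} := by
  have hMC : M = U * (V * diagonal d)ᵀ := by
    rw [hsvd, transpose_mul, diagonal_transpose, Matrix.mul_assoc]
  refine ⟨⟨_, coe_range_skewTangentMap U⟩, ?_, ?_⟩
  · rintro A ⟨X, rfl⟩
    exact transpose_mul_transpose_sub_eq_neg U X
  · exact setOf_mul_transpose_sub_eq_setOf_mul_add_mul_transpose hM hMC
      (diagonal_inv_mul_transpose_mul_mul_diagonal hV hd)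

/-- For a rank-`r` real skew-symmetric matrix `M` with compact SVD `M = U D Vᵀ`,
the set `T(M) = {U Xᵀ - X Uᵀ : X ∈ ℝ^{n×r}}` is a linear subspace consisting of
skew-symmetric matrices, and it equals `W = {Δ M + M Δᵀ : Δ ∈ ℝ^{n×n}}`. -/
theorem tangent_space_rank_manifold_skew {n r : ℕ}
    (M : Matrix (Fin n) (Fin n) ℝ) (hM : Mᵀ = -M) (hrank : M.rank = r)
    (U V : Matrix (Fin n) (Fin r) ℝ) (d : Fin r → ℝ)
    (hU : Uᵀ * U = 1) (hV : Vᵀ * V = 1) (hd : ∀ i, d i ≠ 0)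
    (hsvd : M = U * Matrix.diagonal d * Vᵀ) :
    (∃ T : Submodule ℝ (Matrix (Fin n) (Fin n) ℝ),
      (T : Set (Matrix (Fin n) (Fin n) ℝ)) =
        {A | ∃ X : Matrix (Fin n) (Fin r) ℝ, A = U * Xᵀ - X * Uᵀ}) ∧
    (∀ A ∈ {A : Matrix (Fin n) (Fin n) ℝ |
        ∃ X : Matrix (Fin n) (Fin r) ℝ, A = U * Xᵀ - X * Uᵀ}, Aᵀ = -A) ∧
    {A : Matrix (Fin n) (Fin n) ℝ |
        ∃ X : Matrix (Fin n) (Fin r) ℝ, A = U * Xᵀ - X * Uᵀ} =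
      {A : Matrix (Fin n) (Fin n) ℝ |
        ∃ Δ : Matrix (Fin n) (Fin n) ℝ, A = Δ * M + M * Δᵀ} :=
  tangent_space_rank_manifold_skew_general M hM U V d hV hd hsvd
end

section
/- For the objective f(S,L,t) = t‖S‖₁ + (1−t)‖L‖_*, subject to S + L = C with C ≠ 0: for all t with 0 ≤ t < 1/(n+1), the point (C, 0) is the unique minimizer; i.e., for any N ≠ 0, f(C−N, N, t) > f(C, 0, t). -/
open Matrix

/-- The entrywise ℓ1 norm of a square real matrix. -/
noncomputable def entrywiseL1 {n : ℕ} (A : Matrix (Fin n) (Fin n) ℝ) : ℝ :=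
  ∑ i, ∑ j, |A i j|

/-- The nuclear norm of a square real matrix: the sum of its singular values. -/
noncomputable def nuclearNorm {n : ℕ} (A : Matrix (Fin n) (Fin n) ℝ) : ℝ :=
  ∑ i, Real.sqrt ((Matrix.isHermitian_conjTranspose_mul_self A).eigenvalues i)

/-- The objective `f(S, L, t) = t ‖S‖₁ + (1 - t) ‖L‖_*`. -/
noncomputable def objF {n : ℕ} (S L : Matrix (Fin n) (Fin n) ℝ) (t : ℝ) : ℝ :=
  t * entrywiseL1 S + (1 - t) * nuclearNorm L

/-! Since `‖N‖₁ ≤ n ‖N‖_*`, moving a nonzero `N` from the sparse to the low-rank part saves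
at most `t n ‖N‖_*` in the ℓ1 term but costs `(1 - t) ‖N‖_* > 0` in the nuclear term, and
`t n < 1 - t` exactly when `t < 1/(n+1)`. -/

namespace Matrix

variable {n : ℕ}

lemma entrywiseL1_add_le (A B : Matrix (Fin n) (Fin n) ℝ) :
    entrywiseL1 (A + B) ≤ entrywiseL1 A + entrywiseL1 B := by
  simp only [entrywiseL1, ← Finset.sum_add_distrib]
  gcongr with i _ j _
  exact abs_add_le _ _

lemma entrywiseL1_sq_le (A : Matrix (Fin n) (Fin n) ℝ) :
    entrywiseL1 A ^ 2 ≤ (n : ℝ) ^ 2 * ∑ i, ∑ j, A i j ^ 2 := by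
  have h := sq_sum_le_card_mul_sum_sq (s := (Finset.univ : Finset (Fin n × Fin n)))
    (f := fun p => |A p.1 p.2|)
  simp only [Finset.card_univ, Fintype.card_prod, Fintype.card_fin, sq_abs,
    Fintype.sum_prod_type] at h
  simpa [entrywiseL1, sq] using h

lemma sum_sq_singularValues (A : Matrix (Fin n) (Fin n) ℝ) :
    ∑ i, √((isHermitian_conjTranspose_mul_self A).eigenvalues i) ^ 2 = ∑ i, ∑ j, A i j ^ 2 := by
  have htrace := (isHermitian_conjTranspose_mul_self A).trace_eq_sum_eigenvalues
  simp only [RCLike.ofReal_real_eq_id, id] at htrace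
  simp only [Real.sq_sqrt (eigenvalues_conjTranspose_mul_self_nonneg A _), ← htrace]
  rw [Finset.sum_comm]
  simp [trace, mul_apply, sq]

lemma nuclearNorm_nonneg (A : Matrix (Fin n) (Fin n) ℝ) : 0 ≤ nuclearNorm A :=
  Finset.sum_nonneg fun _ _ => Real.sqrt_nonneg _

lemma nuclearNorm_eq_zero_iff {A : Matrix (Fin n) (Fin n) ℝ} : nuclearNorm A = 0 ↔ A = 0 := by
  rw [nuclearNorm, Finset.sum_eq_zero_iff_of_nonneg fun _ _ => Real.sqrt_nonneg _,
    ← conjTranspose_mul_self_eq_zero,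
    ← (isHermitian_conjTranspose_mul_self A).eigenvalues_eq_zero_iff, funext_iff]
  simp only [Finset.mem_univ, true_implies, Pi.zero_apply,
    Real.sqrt_eq_zero (eigenvalues_conjTranspose_mul_self_nonneg A _)]

lemma nuclearNorm_pos {A : Matrix (Fin n) (Fin n) ℝ} (hA : A ≠ 0) : 0 < nuclearNorm A :=
  (nuclearNorm_nonneg A).lt_of_ne (Ne.symm (mt nuclearNorm_eq_zero_iff.mp hA))

lemma entrywiseL1_le_mul_nuclearNorm (A : Matrix (Fin n) (Fin n) ℝ) :
    entrywiseL1 A ≤ n * nuclearNorm A := by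
  have hfrob : ∑ i, ∑ j, A i j ^ 2 ≤ nuclearNorm A ^ 2 := by
    rw [← sum_sq_singularValues]
    exact Finset.sum_sq_le_sq_sum_of_nonneg fun _ _ => Real.sqrt_nonneg _
  have hsq : entrywiseL1 A ^ 2 ≤ (n * nuclearNorm A) ^ 2 := by
    rw [mul_pow]
    exact (entrywiseL1_sq_le A).trans (by gcongr)
  exact abs_le_of_sq_le_sq' hsq (mul_nonneg n.cast_nonneg (nuclearNorm_nonneg A)) |>.2

end Matrix

theorem small_t_unique_minimizer_general {n : ℕ} (C : Matrix (Fin n) (Fin n) ℝ)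
    (t : ℝ) (ht0 : 0 ≤ t) (ht1 : t < 1 / ((n : ℝ) + 1))
    (N : Matrix (Fin n) (Fin n) ℝ) (hN : N ≠ 0) :
    objF C 0 t < objF (C - N) N t := by
  have htn : t * n < 1 - t := by
    rw [lt_div_iff₀ (by positivity)] at ht1
    linarith
  have hsplit : t * entrywiseL1 C ≤ t * entrywiseL1 (C - N) + t * (n * nuclearNorm N) := by
    rw [← mul_add]
    gcongr
    calc entrywiseL1 C = entrywiseL1 (C - N + N) := by rw [sub_add_cancel]
      _ ≤ entrywiseL1 (C - N) + entrywiseL1 N := entrywiseL1_add_le _ _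
      _ ≤ entrywiseL1 (C - N) + n * nuclearNorm N := by
        gcongr; exact entrywiseL1_le_mul_nuclearNorm N
  have hgain : t * n * nuclearNorm N < (1 - t) * nuclearNorm N :=
    mul_lt_mul_of_pos_right htn (nuclearNorm_pos hN)
  rw [objF, objF, nuclearNorm_eq_zero_iff.mpr rfl]
  linarith

/-- For `0 ≤ t < 1/(n+1)` and `C ≠ 0`, the point `(C, 0)` is the unique
minimizer of `f(S, L, t)` over `S + L = C`: for any `N ≠ 0`,
`f(C - N, N, t) > f(C, 0, t)`. -/
theorem small_t_unique_minimizer {n : ℕ} (C : Matrix (Fin n) (Fin n) ℝ)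
    (hC : C ≠ 0) (t : ℝ) (ht0 : 0 ≤ t) (ht1 : t < 1 / ((n : ℝ) + 1))
    (N : Matrix (Fin n) (Fin n) ℝ) (hN : N ≠ 0) :
    objF C 0 t < objF (C - N) N t :=
  small_t_unique_minimizer_general C t ht0 ht1 N hN
end

section
/- Every real skew-symmetric n×n matrix M of rank r can be written M = P Q Pᵀ where P is invertible and Q is block diagonal with r/2 copies of the 2×2 block [[0,1],[-1,0]] followed by zeros (Youla decomposition). -/
/-!
A nonzero skew-symmetric `M` has an entry `M i j ≠ 0` with `i ≠ j`. After moving `i, j` to the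
front, the top-left `2 × 2` block `[[0, c], [-c, 0]]` is invertible, and eliminating the rest of
the first two rows and columns is a congruence that leaves a skew-symmetric Schur complement `S`
with `rank M = 2 + rank S`. The `2 × 2` block rescales to `[[0, 1], [-1, 0]]`, and induction on
the size handles `S`.
-/

open Matrix

/-- The canonical skew-symmetric matrix with `r/2` copies of `[[0,1],[-1,0]]` on the
diagonal (occupying the top-left `r × r` block) and zeros elsewhere. -/
def youlaQ (n r : ℕ) : Matrix (Fin n) (Fin n) ℝ := fun i j =>
  if i.val % 2 = 0 ∧ j.val = i.val + 1 ∧ j.val < r then 1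
  else if j.val % 2 = 0 ∧ i.val = j.val + 1 ∧ i.val < r then -1
  else 0

theorem Equiv.Perm.exists_apply_eq_and_apply_eq {α : Type*} [DecidableEq α] {a b c d : α}
    (hab : a ≠ b) (hcd : c ≠ d) : ∃ σ : Equiv.Perm α, σ a = c ∧ σ b = d := by
  refine ⟨Equiv.swap a c * Equiv.swap b (Equiv.swap a c d), ?_, by simp⟩
  have hd : Equiv.swap a c d ≠ a := by
    rw [Ne, Equiv.swap_apply_eq_iff, Equiv.swap_apply_left]
    exact hcd.symm
  simp [Equiv.swap_apply_of_ne_of_ne hab hd.symm]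

theorem Submodule.finrank_prod {K V W : Type*} [DivisionRing K] [AddCommGroup V] [Module K V]
    [FiniteDimensional K V] [AddCommGroup W] [Module K W] [FiniteDimensional K W]
    (p : Submodule K V) (q : Submodule K W) :
    Module.finrank K (p.prod q) = Module.finrank K p + Module.finrank K q := by
  let e : p.prod q ≃ₗ[K] p × q :=
    { toFun := fun x => (⟨x.1.1, x.2.1⟩, ⟨x.1.2, x.2.2⟩)
      invFun := fun y => ⟨(y.1, y.2), y.1.2, y.2.2⟩
      map_add' := fun _ _ => rfl
      map_smul' := fun _ _ => rfl
      left_inv := fun _ => rfl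
      right_inv := fun _ => rfl }
  rw [e.finrank_eq, Module.finrank_prod]

namespace Matrix

variable {m n R : Type*} [Fintype m] [DecidableEq m] [Fintype n] [DecidableEq n]

theorem rank_fromBlocks_zero_zero {K : Type*} [Field K] (A : Matrix m m K) (D : Matrix n n K) :
    (fromBlocks A 0 0 D).rank = A.rank + D.rank := by
  have h := LinearMap.toMatrix_prodMap (Pi.basisFun K m) (Pi.basisFun K n) (toLin' A) (toLin' D)
  simp only [LinearMap.toMatrix_eq_toMatrix', LinearMap.toMatrix'_toLin'] at h
  rw [← h, rank_eq_finrank_range_toLin _ ((Pi.basisFun K m).prod (Pi.basisFun K n))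
    ((Pi.basisFun K m).prod (Pi.basisFun K n)), toLin_toMatrix, LinearMap.range_prodMap,
    Submodule.finrank_prod, rank, rank, toLin'_apply', toLin'_apply']

section CommRing

variable [CommRing R]

omit [Fintype n] [DecidableEq n] in
theorem diag_eq_zero_of_transpose_eq_neg [IsAddTorsionFree R] {A : Matrix n n R}
    (hA : Aᵀ = -A) (i : n) : A i i = 0 :=
  self_eq_neg.mp (congrFun₂ hA i i)

theorem det_fin_two_of_transpose_eq_neg [IsAddTorsionFree R] {A : Matrix (Fin 2) (Fin 2) R}
    (hA : Aᵀ = -A) : A.det = A 0 1 * A 0 1 := by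
  rw [det_fin_two, diag_eq_zero_of_transpose_eq_neg hA 0, show A 1 0 = -A 0 1 from congrFun₂ hA 0 1]
  ring

def Congruent (A B : Matrix n n R) : Prop :=
  ∃ P : Matrix n n R, IsUnit P.det ∧ A = P * B * Pᵀ

namespace Congruent

@[refl]
theorem refl (A : Matrix n n R) : Congruent A A :=
  ⟨1, by simp, by simp⟩

theorem trans {A B C : Matrix n n R} (hAB : Congruent A B) (hBC : Congruent B C) :
    Congruent A C := by
  obtain ⟨P, hP, rfl⟩ := hAB
  obtain ⟨Q, hQ, rfl⟩ := hBC
  exact ⟨P * Q, by simpa using hP.mul hQ, by simp only [transpose_mul, Matrix.mul_assoc]⟩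

theorem submatrix {A B : Matrix n n R} (h : Congruent A B) (e : m ≃ n) :
    Congruent (A.submatrix e e) (B.submatrix e e) := by
  obtain ⟨P, hP, rfl⟩ := h
  refine ⟨P.submatrix e e, by rwa [det_submatrix_equiv_self], ?_⟩
  rw [transpose_submatrix, submatrix_mul_equiv _ _ _ e, submatrix_mul_equiv _ _ _ e]

theorem fromBlocks {A A' : Matrix m m R} {D D' : Matrix n n R} (hA : Congruent A A')
    (hD : Congruent D D') : Congruent (fromBlocks A 0 0 D) (fromBlocks A' 0 0 D') := by
  obtain ⟨P, hP, rfl⟩ := hA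
  obtain ⟨Q, hQ, rfl⟩ := hD
  refine ⟨Matrix.fromBlocks P 0 0 Q, by simpa using hP.mul hQ, ?_⟩
  simp [fromBlocks_transpose, fromBlocks_multiply]

theorem rank_eq {A B : Matrix n n R} (h : Congruent A B) : A.rank = B.rank := by
  obtain ⟨P, hP, rfl⟩ := h
  rw [rank_mul_eq_left_of_isUnit_det _ _ (by rwa [det_transpose]),
    rank_mul_eq_right_of_isUnit_det _ _ hP]

end Congruent

theorem congruent_submatrix_perm (A : Matrix n n R) (σ : Equiv.Perm n) :
    Congruent (A.submatrix σ σ) A := by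
  refine ⟨(1 : Matrix n n R).submatrix σ id, ?_, ?_⟩
  · rw [det_permute, det_one, mul_one]
    exact (Equiv.Perm.sign σ).isUnit.map (Int.castRingHom R)
  · ext i j
    simp [mul_apply, one_apply]

theorem congruent_of_submatrix {A B : Matrix n n R} (e f : m ≃ n)
    (h : Congruent (A.submatrix e e) (B.submatrix f f)) : Congruent A B := by
  have h' := h.submatrix e.symm
  rw [submatrix_submatrix, submatrix_submatrix, e.self_comp_symm, submatrix_id_id] at h'
  exact h'.trans (congruent_submatrix_perm B (e.symm.trans f))

theorem congruent_fin_two_of_transpose_eq_neg [IsAddTorsionFree R]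
    {A : Matrix (Fin 2) (Fin 2) R} (hA : Aᵀ = -A) (h01 : IsUnit (A 0 1)) :
    Congruent A !![0, 1; -1, 0] := by
  refine ⟨!![A 0 1, 0; 0, 1], by simpa using h01, ?_⟩
  have h10 : A 1 0 = -A 0 1 := congrFun₂ hA 0 1
  ext i j
  fin_cases i <;> fin_cases j <;>
    simp [mul_apply, Fin.sum_univ_two, h10, diag_eq_zero_of_transpose_eq_neg hA]

/- Block elimination `M = Uᵀ (A ⊕ S) U` with `U = [[1, A⁻¹ B], [0, 1]]`: skew-symmetry of `M`
is what makes the left factor the transpose of the right one. -/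
theorem exists_congruent_fromBlocks_toBlocks₁₁ {M : Matrix (m ⊕ n) (m ⊕ n) R}
    (hM : Mᵀ = -M) (hA : IsUnit M.toBlocks₁₁.det) :
    ∃ S : Matrix n n R, Sᵀ = -S ∧ Congruent M (Matrix.fromBlocks M.toBlocks₁₁ 0 0 S) := by
  obtain ⟨A, B, C, D, rfl⟩ : ∃ A B C D, M = Matrix.fromBlocks A B C D :=
    ⟨_, _, _, _, (fromBlocks_toBlocks M).symm⟩
  rw [fromBlocks_transpose, fromBlocks_neg, fromBlocks_inj] at hM
  obtain ⟨hA', -, hBC, hD⟩ := hM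
  rw [toBlocks_fromBlocks₁₁] at hA ⊢
  obtain rfl : C = -Bᵀ := by rw [hBC, neg_neg]
  obtain ⟨X, hX⟩ : ∃ X, A * X = B := ⟨A⁻¹ * B, mul_nonsing_inv_cancel_left A B hA⟩
  have hXA : Xᵀ * A = -Bᵀ := by
    rw [← hX, transpose_mul, hA', Matrix.mul_neg, neg_neg]
  refine ⟨D + Bᵀ * X, ?_, Matrix.fromBlocks 1 0 Xᵀ 1, by simp, ?_⟩
  · calc (D + Bᵀ * X)ᵀ = -D + Xᵀ * (A * X) := by
          rw [transpose_add, transpose_mul, transpose_transpose, hD, hX]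
      _ = -(D + Bᵀ * X) := by rw [← Matrix.mul_assoc, hXA, Matrix.neg_mul, neg_add]
  · simp [fromBlocks_transpose, fromBlocks_multiply, hXA, hX]

end CommRing

end Matrix

theorem youlaQ_zero (n : ℕ) : youlaQ n 0 = 0 := by
  ext
  simp [youlaQ]

theorem youlaQ_submatrix_finSumFinEquiv (k r : ℕ) :
    (youlaQ (2 + k) (2 + r)).submatrix finSumFinEquiv finSumFinEquiv =
      fromBlocks !![0, 1; -1, 0] 0 0 (youlaQ k r) := by
  ext (a | a) (b | b)
  · fin_cases a <;> fin_cases b <;> simp [youlaQ] <;> omega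
  all_goals simp [youlaQ]; grind

theorem congruent_youlaQ_rank {n : ℕ} (M : Matrix (Fin n) (Fin n) ℝ) (hM : Mᵀ = -M) :
    M.Congruent (youlaQ n M.rank) := by
  induction n using Nat.strong_induction_on with
  | _ n ih =>
  by_cases hM0 : M = 0
  · subst hM0
    rw [rank_zero, youlaQ_zero]
  obtain ⟨i, j, hij⟩ : ∃ i j, M i j ≠ 0 := by
    by_contra! h
    exact hM0 (Matrix.ext h)
  have hne : i ≠ j := fun h => hij (h ▸ diag_eq_zero_of_transpose_eq_neg hM i)
  obtain ⟨k, rfl⟩ : ∃ k, n = 2 + k := ⟨n - 2, by have := Fin.val_ne_of_ne hne; omega⟩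
  obtain ⟨σ, hσ0, hσ1⟩ :=
    Equiv.Perm.exists_apply_eq_and_apply_eq
      (finSumFinEquiv.injective.ne (by simp) : finSumFinEquiv (.inl 0 : Fin 2 ⊕ Fin k) ≠
        finSumFinEquiv (.inl 1)) hne
  set e : Fin 2 ⊕ Fin k ≃ Fin (2 + k) := finSumFinEquiv.trans σ
  set N := M.submatrix e e
  have hN : Nᵀ = -N := by rw [transpose_submatrix, hM]; rfl
  have hA : N.toBlocks₁₁ᵀ = -N.toBlocks₁₁ := by ext a b; exact congrFun₂ hN (.inl a) (.inl b)
  have hA01 : IsUnit (N.toBlocks₁₁ 0 1) := by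
    simpa [N, toBlocks₁₁, show e (.inl 0) = i from hσ0, show e (.inl 1) = j from hσ1] using hij
  have hdet : IsUnit N.toBlocks₁₁.det := by
    simpa [det_fin_two_of_transpose_eq_neg hA] using hA01
  obtain ⟨S, hS, hNS⟩ := exists_congruent_fromBlocks_toBlocks₁₁ hN hdet
  have hrank : M.rank = 2 + S.rank := by
    rw [← rank_submatrix M e e, hNS.rank_eq, rank_fromBlocks_zero_zero,
      rank_of_isUnit _ ((isUnit_iff_isUnit_det _).2 hdet), Fintype.card_fin]
  have hNY : N.Congruent ((youlaQ (2 + k) M.rank).submatrix finSumFinEquiv finSumFinEquiv) := by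
    rw [hrank, youlaQ_submatrix_finSumFinEquiv]
    exact hNS.trans ((congruent_fin_two_of_transpose_eq_neg hA hA01).fromBlocks
      (ih k (by omega) S hS))
  exact congruent_of_submatrix e finSumFinEquiv hNY

/-- Youla decomposition: every real skew-symmetric `n × n` matrix `M` of rank `r`
can be written as `M = P Q Pᵀ` with `P` invertible. -/
theorem youla_decomposition {n r : ℕ} (M : Matrix (Fin n) (Fin n) ℝ)
    (hM : Mᵀ = -M) (hrank : M.rank = r) :
    ∃ P : Matrix (Fin n) (Fin n) ℝ, IsUnit P.det ∧ M = P * youlaQ n r * Pᵀ :=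
  hrank ▸ congruent_youlaQ_rank M hM
end
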